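/- arXiv:0911.1830 — 3 statements merged into one kernel-verified Lean document; each statement's English description precedes it below -/
import Mathlib

section
/- For Re(s) > 0, the Euler product ∏_p (1 + 1/((p-1)p^s)) over primes p equals the Dirichlet series ∑_{n=1}^∞ μ²(n)/(φ(n) n^s). -/
/-!
The coefficient `f(n) = μ(n)² / (φ(n) n^s)` is multiplicative and vanishes on `p^k` for `k ≥ 2`,
so its Euler factor at `p` is `1 + f(p) = 1 + 1/((p - 1) p^s)`, and the identity is the Euler
product for multiplicative functions once `∑ ‖f(n)‖` converges. For that, the partial sums of
`‖f‖` below `N` are dominated by its sum over `N`-smooth numbers, which factors as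
`∏_{p<N} (1 + ‖f(p)‖) ≤ exp (∑_p 2 p^(-1-Re s))`, since `p - 1 ≥ p / 2`.
-/

open Complex ArithmeticFunction

open Finset in
theorem summable_of_multiplicative_of_tsum_prime_pow_le {g : ℕ → ℝ} (hg : 0 ≤ g)
    (hg₀ : g 0 = 0) (hg₁ : g 1 = 1) (hmul : ∀ {m n}, m.Coprime n → g (m * n) = g m * g n)
    (hpow : ∀ {p}, p.Prime → Summable fun e ↦ g (p ^ e)) {b : ℕ → ℝ} (hb : 0 ≤ b)
    (hb_sum : Summable b) (hbound : ∀ {p}, p.Prime → ∑' e, g (p ^ e) ≤ 1 + b p) :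
    Summable g := by
  refine summable_of_sum_range_le hg (c := Real.exp (∑' n, b n)) fun N ↦ ?_
  have hsmooth := (EulerProduct.summable_and_hasSum_smoothNumbers_prod_primesBelow_tsum hg₁ hmul
    (fun hp ↦ by simpa only [Real.norm_of_nonneg (hg _)] using hpow hp) N).2
  have hrange : ∑ n ∈ range N, g n = ∑ m ∈ (range N).preimage Subtype.val
      Subtype.val_injective.injOn, g (m : N.smoothNumbers) := by
    refine (sum_preimage _ _ _ _ fun n hn hns ↦ ?_).symm
    obtain rfl : n = 0 := by
      by_contra h
      exact hns ⟨⟨n, Nat.mem_smoothNumbers_of_lt (Nat.pos_of_ne_zero h) (mem_range.mp hn)⟩, rfl⟩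
    exact hg₀
  calc ∑ n ∈ range N, g n
      ≤ ∏ p ∈ N.primesBelow, ∑' e, g (p ^ e) :=
        hrange ▸ sum_le_hasSum _ (fun m _ ↦ hg m) hsmooth
    _ ≤ ∏ p ∈ N.primesBelow, Real.exp (b p) := by
        refine prod_le_prod (fun p _ ↦ tsum_nonneg fun e ↦ hg _) fun p hp ↦ ?_
        exact (hbound (Nat.prime_of_mem_primesBelow hp)).trans
          (by linarith [Real.add_one_le_exp (b p)])
    _ = Real.exp (∑ p ∈ N.primesBelow, b p) := (Real.exp_sum _ _).symm
    _ ≤ Real.exp (∑' n, b n) := Real.exp_le_exp.mpr (hb_sum.sum_le_tsum _ fun n _ ↦ hb n)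

noncomputable def moebiusSqDivTotientCpow (s : ℂ) : ArithmeticFunction ℂ :=
  ⟨fun n ↦ (moebius n : ℂ) ^ 2 / ((Nat.totient n : ℂ) * (n : ℂ) ^ s), by simp⟩

namespace moebiusSqDivTotientCpow

variable (s : ℂ)

theorem apply (n : ℕ) :
    moebiusSqDivTotientCpow s n = (moebius n : ℂ) ^ 2 / ((Nat.totient n : ℂ) * (n : ℂ) ^ s) :=
  rfl

theorem isMultiplicative : (moebiusSqDivTotientCpow s).IsMultiplicative := by
  refine ⟨by simp [apply], fun {m n} hmn ↦ ?_⟩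
  simp only [apply, isMultiplicative_moebius.map_mul_of_coprime hmn, Nat.totient_mul hmn,
    Nat.cast_mul, natCast_mul_natCast_cpow, Int.cast_mul, mul_pow]
  rw [mul_mul_mul_comm, mul_div_mul_comm]

theorem apply_prime {p : ℕ} (hp : p.Prime) :
    moebiusSqDivTotientCpow s p = 1 / (((p : ℂ) - 1) * (p : ℂ) ^ s) := by
  rw [apply, moebius_apply_prime hp, Nat.totient_prime hp, Nat.cast_sub hp.one_le]
  norm_num

theorem apply_prime_pow {p k : ℕ} (hp : p.Prime) (hk : 2 ≤ k) :
    moebiusSqDivTotientCpow s (p ^ k) = 0 := by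
  rw [apply, moebius_apply_prime_pow hp (by omega), if_neg (by omega)]
  simp

theorem tsum_prime_pow {M : Type*} [AddCommMonoid M] [TopologicalSpace M] (g : ℂ → M)
    (hg : g 0 = 0) {p : ℕ} (hp : p.Prime) :
    ∑' e, g (moebiusSqDivTotientCpow s (p ^ e)) = g 1 + g (moebiusSqDivTotientCpow s p) := by
  rw [tsum_eq_sum (s := Finset.range 2) fun e he ↦ by
    rw [apply_prime_pow s hp (by simp at he; omega), hg]]
  simp [Finset.sum_range_succ, (isMultiplicative s).map_one]

theorem norm_apply_prime_le {p : ℕ} (hp : p.Prime) :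
    ‖moebiusSqDivTotientCpow s p‖ ≤ 2 * (p : ℝ) ^ (-(1 + s.re)) := by
  have hp2 : (2 : ℝ) ≤ p := by exact_mod_cast hp.two_le
  have hpow : 0 < (p : ℝ) ^ s.re := by positivity
  rw [apply_prime s hp, norm_div, norm_one, norm_mul, norm_natCast_cpow_of_pos hp.pos,
    show (p : ℂ) - 1 = ((p - 1 : ℝ) : ℂ) by push_cast; ring, norm_real,
    Real.norm_of_nonneg (by linarith), Real.rpow_neg (by positivity), Real.rpow_add (by positivity),
    Real.rpow_one, ← div_eq_mul_inv, div_le_div_iff₀ (mul_pos (by linarith) hpow) (by positivity)]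
  nlinarith

theorem summable_norm (hs : 0 < s.re) : Summable (‖moebiusSqDivTotientCpow s ·‖) := by
  have hmul := isMultiplicative s
  refine summable_of_multiplicative_of_tsum_prime_pow_le (fun n ↦ norm_nonneg _) (by simp)
    (by simp [hmul.map_one]) (fun hmn ↦ by rw [hmul.map_mul_of_coprime hmn, norm_mul])
    (fun hp ↦ summable_of_ne_finset_zero (s := Finset.range 2) fun e he ↦ by
      rw [apply_prime_pow s hp (by simp at he; omega), norm_zero])
    (b := fun n ↦ 2 * (n : ℝ) ^ (-(1 + s.re))) (fun n ↦ by positivity)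
    ((Real.summable_nat_rpow.mpr (by linarith)).mul_left 2) fun hp ↦ ?_
  rw [tsum_prime_pow s norm norm_zero hp, norm_one]
  linarith [norm_apply_prime_le s hp]

end moebiusSqDivTotientCpow

/-- For `Re s > 0`, the Euler product `∏_p (1 + 1/((p-1) p^s))` equals the
Dirichlet series `∑_{n ≥ 1} μ(n)² / (φ(n) n^s)`. -/
theorem euler_product_eq_dirichlet_series (s : ℂ) (hs : 0 < s.re) :
    (∏' p : Nat.Primes, (1 + 1 / (((p : ℂ) - 1) * (p : ℂ) ^ s))) =
      ∑' n : ℕ+, ((moebius n : ℂ) ^ 2 / ((Nat.totient n : ℂ) * (n : ℂ) ^ s)) := by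
  open moebiusSqDivTotientCpow in
  have hfactor (p : Nat.Primes) : 1 + 1 / (((p : ℂ) - 1) * (p : ℂ) ^ s) =
      ∑' e, moebiusSqDivTotientCpow s (p ^ e) := by
    simpa [apply_prime s p.prop, (isMultiplicative s).map_one] using
      (tsum_prime_pow s id rfl p.prop).symm
  open moebiusSqDivTotientCpow in
  rw [tprod_congr hfactor, (isMultiplicative s).eulerProduct_tprod (summable_norm s hs),
    ← tsum_pnat_eq_tsum_of_eq_zero (moebiusSqDivTotientCpow s).map_zero]
  rfl
end

section
/- The derivative at X = 0 of the complex function F(X) = ∏_p (1 - (p^{4πiX} - 1)/(p(p^{1+4πiX}+1))) (product over all primes p) equals -4πi ∑_p (log p)/(p(p+1)). -/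
/-!
Write the factors as `1 - t_p (c X)` with `c = 4πi` and `t_p w = (p^w - 1) / (p (p^(1+w) + 1))`
(`eulerTerm`). For `p ≥ 4` one has `‖t_p w‖ ≤ 4 p^(-3/2)` on the strip `|Re w| ≤ 1/4`, so the
product converges locally uniformly near `0` and its logarithmic derivative is the sum of those
of the factors. At `X = 0` every factor equals `1`, so the derivative of the product is the sum
of the derivatives `-c log p / (p (p + 1))` of the factors.
-/

open Complex Real Filter

theorem deriv_tprod_of_eq_one {ι : Type*} {s : Set ℂ} (hs : IsOpen s) {x : ℂ} (hx : x ∈ s)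
    {f : ι → ℂ → ℂ} (hf : ∀ i, f i x = 1) (hd : ∀ i, DifferentiableOn ℂ (f i) s)
    (hm : Summable fun i ↦ deriv (f i) x) (htend : MultipliableLocallyUniformlyOn f s) :
    deriv (∏' i, f i ·) x = ∑' i, deriv (f i) x := by
  have h := logDeriv_tprod_eq_tsum hs hx (by simp [hf]) hd (by simpa [logDeriv_apply, hf]) htend
    (by simp [hf])
  simpa [logDeriv_apply, hf] using h

lemma Real.log_div_mul_add_one_le {x : ℝ} (hx : 0 < x) :
    Real.log x / (x * (x + 1)) ≤ 2 * x ^ (-(3 / 2) : ℝ) := by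
  have hlog : Real.log x ≤ 2 * x ^ (1 / 2 : ℝ) := by
    simpa [div_eq_mul_inv, mul_comm] using Real.log_le_rpow_div hx.le (one_half_pos (α := ℝ))
  calc Real.log x / (x * (x + 1)) ≤ 2 * x ^ (1 / 2 : ℝ) / (x * x) :=
        div_le_div₀ (by positivity) hlog (by positivity) (by nlinarith)
    _ = 2 * x ^ (-(3 / 2) : ℝ) := by
        rw [show (-(3 / 2) : ℝ) = 1 / 2 - 2 by norm_num, Real.rpow_sub hx, Real.rpow_two]
        ring

lemma Nat.Primes.summable_log_div_mul_add_one :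
    Summable fun p : Nat.Primes ↦ (Real.log p : ℂ) / ((p : ℂ) * ((p : ℂ) + 1)) := by
  refine .of_norm_bounded
    ((Nat.Primes.summable_rpow.mpr (by norm_num : -(3 / 2) < (-1 : ℝ))).mul_left 2) fun p ↦ ?_
  have hp : (1 : ℝ) ≤ p := by exact_mod_cast p.2.one_lt.le
  convert Real.log_div_mul_add_one_le (zero_lt_one.trans_le hp) using 1
  rw [norm_div, norm_mul, Complex.norm_real, Real.norm_of_nonneg (Real.log_nonneg hp)]
  norm_cast

lemma Nat.Primes.eventually_cofinite_ge (N : ℕ) :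
    ∀ᶠ p : Nat.Primes in cofinite, N ≤ (p : ℕ) :=
  (Nat.cofinite_eq_atTop ▸ Nat.Primes.coe_nat_injective.tendsto_cofinite :
    Tendsto ((↑) : Nat.Primes → ℕ) cofinite atTop).eventually_ge_atTop N

noncomputable def eulerTerm (n : ℕ) (w : ℂ) : ℂ :=
  ((n : ℂ) ^ w - 1) / ((n : ℂ) * ((n : ℂ) ^ (1 + w) + 1))

section EulerTerm

variable {n : ℕ} {w : ℂ}

lemma eulerTerm_zero (n : ℕ) : eulerTerm n 0 = 0 := by simp [eulerTerm]

lemma natCast_mul_cpow_one_add_add_one_ne_zero (hn : 1 < n) (hw : -1 < w.re) :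
    (n : ℂ) * ((n : ℂ) ^ (1 + w) + 1) ≠ 0 := by
  refine mul_ne_zero (by exact_mod_cast (zero_lt_one.trans hn).ne') fun h ↦ ?_
  have hnorm : ‖(n : ℂ) ^ (1 + w)‖ = 1 := by
    rw [eq_neg_of_add_eq_zero_left h, norm_neg, norm_one]
  rw [norm_natCast_cpow_of_pos (zero_lt_one.trans hn)] at hnorm
  have : (1 : ℝ) < (n : ℝ) ^ (1 + w).re :=
    Real.one_lt_rpow (by exact_mod_cast hn) (by simp; linarith)
  linarith

lemma differentiableAt_eulerTerm (hn : 1 < n) (hw : -1 < w.re) :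
    DifferentiableAt ℂ (eulerTerm n) w := by
  have hn0 : (n : ℂ) ≠ 0 := by exact_mod_cast (zero_lt_one.trans hn).ne'
  refine DifferentiableAt.div ?_ ?_ (natCast_mul_cpow_one_add_add_one_ne_zero hn hw)
  · exact (differentiableAt_id.const_cpow (Or.inl hn0)).sub_const 1
  · exact (((differentiableAt_id.const_add 1).const_cpow (Or.inl hn0)).add_const 1).const_mul _

lemma hasDerivAt_eulerTerm_zero (hn : 1 < n) :
    HasDerivAt (eulerTerm n) ((Real.log n : ℂ) / ((n : ℂ) * ((n : ℂ) + 1))) 0 := by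
  have hn0 : (n : ℂ) ≠ 0 := by exact_mod_cast (zero_lt_one.trans hn).ne'
  have hD := natCast_mul_cpow_one_add_add_one_ne_zero (w := 0) hn (by simp)
  have hnum := ((hasDerivAt_id (0 : ℂ)).const_cpow (Or.inl hn0)).sub_const 1
  have hden : DifferentiableAt ℂ (fun w : ℂ ↦ (n : ℂ) * ((n : ℂ) ^ (1 + w) + 1)) 0 :=
    (((differentiableAt_id.const_add 1).const_cpow (Or.inl hn0)).add_const 1).const_mul _
  refine (hnum.div hden.hasDerivAt hD).congr_deriv ?_
  simp only [id, cpow_zero, sub_self, zero_mul, sub_zero, mul_one, add_zero, cpow_one] at hD ⊢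
  rw [Complex.natCast_log]
  field_simp

lemma norm_eulerTerm_le (hn : 4 ≤ n) (hw : |w.re| ≤ 1 / 4) :
    ‖eulerTerm n w‖ ≤ 4 * (n : ℝ) ^ (-(3 / 2) : ℝ) := by
  have hn0 : 0 < n := by omega
  have hx : (0 : ℝ) < n := by exact_mod_cast hn0
  have hx1 : (1 : ℝ) ≤ n := by exact_mod_cast hn0
  obtain ⟨hw₁, hw₂⟩ := abs_le.mp hw
  have hnum : ‖(n : ℂ) ^ w - 1‖ ≤ 2 * (n : ℝ) ^ (1 / 4 : ℝ) := by
    have h1 : (1 : ℝ) ≤ (n : ℝ) ^ (1 / 4 : ℝ) := Real.one_le_rpow hx1 (by norm_num)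
    have h2 : (n : ℝ) ^ w.re ≤ (n : ℝ) ^ (1 / 4 : ℝ) :=
      Real.rpow_le_rpow_of_exponent_le hx1 hw₂
    calc ‖(n : ℂ) ^ w - 1‖ ≤ ‖(n : ℂ) ^ w‖ + ‖(1 : ℂ)‖ := norm_sub_le _ _
      _ ≤ 2 * (n : ℝ) ^ (1 / 4 : ℝ) := by
        rw [norm_natCast_cpow_of_pos hn0, norm_one]; linarith
  have hden : (n : ℝ) ^ (3 / 4 : ℝ) / 2 ≤ ‖(n : ℂ) ^ (1 + w) + 1‖ := by
    have h1 : (2 : ℝ) ≤ (n : ℝ) ^ (3 / 4 : ℝ) :=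
      calc (2 : ℝ) = √4 := by rw [show (4 : ℝ) = 2 ^ 2 by norm_num, Real.sqrt_sq two_pos.le]
        _ ≤ √n := Real.sqrt_le_sqrt (by exact_mod_cast hn)
        _ ≤ (n : ℝ) ^ (3 / 4 : ℝ) := by
          rw [Real.sqrt_eq_rpow]; exact Real.rpow_le_rpow_of_exponent_le hx1 (by norm_num)
    have h2 : (n : ℝ) ^ (3 / 4 : ℝ) ≤ ‖(n : ℂ) ^ (1 + w)‖ := by
      rw [norm_natCast_cpow_of_pos hn0]
      exact Real.rpow_le_rpow_of_exponent_le hx1 (by simp; linarith)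
    have h3 := norm_sub_le ((n : ℂ) ^ (1 + w) + 1) 1
    rw [add_sub_cancel_right, norm_one] at h3
    linarith
  calc ‖eulerTerm n w‖ = ‖(n : ℂ) ^ w - 1‖ / (n * ‖(n : ℂ) ^ (1 + w) + 1‖) := by
        rw [eulerTerm, norm_div, norm_mul, Complex.norm_natCast]
    _ ≤ 2 * (n : ℝ) ^ (1 / 4 : ℝ) / (n * ((n : ℝ) ^ (3 / 4 : ℝ) / 2)) := by gcongr
    _ = 4 * (n : ℝ) ^ (-(3 / 2) : ℝ) := by
        rw [show (-(3 / 2) : ℝ) = 1 / 4 - (1 + 3 / 4) by norm_num, Real.rpow_sub hx,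
          Real.rpow_add hx, Real.rpow_one]
        ring

end EulerTerm

section Strip

variable (c : ℂ)

lemma isOpen_setOf_abs_re_mul_lt : IsOpen {X : ℂ | |(c * X).re| < 1 / 4} :=
  isOpen_lt (by fun_prop) continuous_const

lemma differentiableOn_eulerTerm_mul {n : ℕ} (hn : 1 < n) :
    DifferentiableOn ℂ (fun X ↦ eulerTerm n (c * X)) {X : ℂ | |(c * X).re| < 1 / 4} :=
  fun X (hX : |(c * X).re| < 1 / 4) ↦
    ((differentiableAt_eulerTerm hn (by linarith [(abs_lt.mp hX).1])).comp X
      (differentiableAt_id.const_mul c)).differentiableWithinAt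

lemma multipliableLocallyUniformlyOn_one_sub_eulerTerm_mul :
    MultipliableLocallyUniformlyOn (fun (p : Nat.Primes) X ↦ 1 - eulerTerm p (c * X))
      {X : ℂ | |(c * X).re| < 1 / 4} := by
  simp_rw [sub_eq_add_neg]
  refine Summable.multipliableLocallyUniformlyOn_one_add (isOpen_setOf_abs_re_mul_lt c)
    ((Nat.Primes.summable_rpow.mpr (by norm_num : -(3 / 2) < (-1 : ℝ))).mul_left 4) ?_
    fun p ↦ (differentiableOn_eulerTerm_mul c p.2.one_lt).continuousOn.neg
  filter_upwards [Nat.Primes.eventually_cofinite_ge 4] with p hp X hX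
  rw [norm_neg]
  exact norm_eulerTerm_le hp (le_of_lt hX)

lemma hasDerivAt_one_sub_eulerTerm_mul {n : ℕ} (hn : 1 < n) :
    HasDerivAt (fun X ↦ 1 - eulerTerm n (c * X))
      (-c * ((Real.log n : ℂ) / ((n : ℂ) * ((n : ℂ) + 1)))) 0 := by
  have h := (hasDerivAt_eulerTerm_zero hn).comp_of_eq (0 : ℂ)
    ((hasDerivAt_id (0 : ℂ)).const_mul c) (by simp)
  exact (h.const_sub 1).congr_deriv (by ring)

theorem deriv_tprod_one_sub_eulerTerm_mul :
    deriv (fun X ↦ ∏' p : Nat.Primes, (1 - eulerTerm p (c * X))) 0 =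
      -c * ∑' p : Nat.Primes, (Real.log p : ℂ) / ((p : ℂ) * ((p : ℂ) + 1)) := by
  have hderiv (p : Nat.Primes) := (hasDerivAt_one_sub_eulerTerm_mul c p.2.one_lt).deriv
  rw [deriv_tprod_of_eq_one (isOpen_setOf_abs_re_mul_lt c) (by simp)
    (fun p ↦ by simp [eulerTerm_zero])
    (fun p ↦ (differentiableOn_eulerTerm_mul c p.2.one_lt).const_sub 1)
    (by simpa only [hderiv] using Nat.Primes.summable_log_div_mul_add_one.mul_left (-c))
    (multipliableLocallyUniformlyOn_one_sub_eulerTerm_mul c), tsum_congr hderiv, tsum_mul_left]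

end Strip

/-- The derivative at `X = 0` of `F(X) = ∏_p (1 - (p^{4πiX}-1)/(p(p^{1+4πiX}+1)))`
equals `-4πi ∑_p (log p)/(p(p+1))`. -/
theorem deriv_euler_product_factor :
    deriv (fun X : ℂ => ∏' p : Nat.Primes,
        (1 - ((p : ℂ) ^ (4 * (π : ℂ) * I * X) - 1) /
          ((p : ℂ) * ((p : ℂ) ^ (1 + 4 * (π : ℂ) * I * X) + 1)))) 0 =
      -4 * (π : ℂ) * I *
        ∑' p : Nat.Primes, (Real.log p : ℂ) / ((p : ℂ) * ((p : ℂ) + 1)) :=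
  (deriv_tprod_one_sub_eulerTerm_mul (4 * π * I)).trans (by ring)
end

section
/- Let k ≥ 2 be an integer and σ, R, N > 1 with R ≥ N. Suppose h : ℝ → ℂ is bounded with support in (-σ, σ). Then ∑_{b=1}^∞ (μ²(b)/φ(b)) ∫_0^∞ |J_{k-1}(y)| · |h(2 log(b y √N / (4π)) / log R)| dy converges; more precisely, the b-th summand is O_{k,h}(R^{kσ/2}/(φ(b) b^k)), so the series is dominated by a convergent series. -/
/-!
Expanding `exp (-i x sin θ)` in Bessel's integral to order `n` leaves a Taylor polynomial that
integrates to zero against `exp (i n θ)`, since `sin^m θ` only has frequencies `|j| ≤ m < n`; the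
remainder gives `|J_n(x)| ≤ x^n e^x`, hence `|J_n(y)| ≤ e y^n` for all `y ≥ 0` as `|J_n| ≤ 1`.
The support of `h` cuts the `y`-integral off at `T = 4π R^{σ/2} / (b √N)`, so with `‖h‖ ≤ B` the
`b`-th integral is at most `e B T^k ≤ e B (4π)^k R^{kσ/2} / b^k`; with `μ(b)² ≤ 1` this bounds
the summand, and `∑ b^{-k}` converges for `k ≥ 2`.
-/

open Real MeasureTheory ArithmeticFunction

/-- The Bessel function of the first kind of (integer) order `n`, via Bessel's
integral representation. -/
noncomputable def besselJ (n : ℕ) (x : ℝ) : ℝ :=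
  (1 / π) * ∫ θ in (0 : ℝ)..π, Real.cos (n * θ - x * Real.sin θ)

lemma exp_mul_I_mul_neg_sin_mul_I (s θ : ℝ) :
    Complex.exp (s * Complex.I) * -(Real.sin θ * Complex.I) =
      (Complex.exp ((s - θ : ℝ) * Complex.I) - Complex.exp ((s + θ : ℝ) * Complex.I)) / 2 := by
  rw [Complex.ofReal_sin, Complex.sin, Complex.ofReal_sub, Complex.ofReal_add,
    sub_mul (s : ℂ), add_mul (s : ℂ), Complex.exp_sub, Complex.exp_add, neg_mul, Complex.exp_neg]
  field_simp
  ring_nf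
  simp only [Complex.I_sq]
  ring

lemma integral_cos_nat_mul_eq_zero {n : ℕ} (hn : n ≠ 0) :
    ∫ θ in (0 : ℝ)..π, Real.cos (n * θ) = 0 := by
  rw [intervalIntegral.integral_comp_mul_left Real.cos (Nat.cast_ne_zero.mpr hn)]
  simp [Real.sin_nat_mul_pi]

lemma integral_re_exp_mul_neg_sin_pow_eq_zero {m n : ℕ} (hmn : m < n) :
    ∫ θ in (0 : ℝ)..π,
      (Complex.exp ((n * θ : ℝ) * Complex.I) * (-(Real.sin θ * Complex.I)) ^ m).re = 0 := by
  induction m generalizing n with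
  | zero =>
    simpa only [pow_zero, mul_one, Complex.exp_ofReal_mul_I_re] using
      integral_cos_nat_mul_eq_zero (by omega : n ≠ 0)
  | succ m ih =>
    obtain ⟨p, rfl⟩ : ∃ p, n = p + 1 := ⟨n - 1, by omega⟩
    have hsplit : ∀ θ : ℝ,
        (Complex.exp (((p + 1 : ℕ) * θ : ℝ) * Complex.I) * (-(Real.sin θ * Complex.I)) ^ (m + 1)).re
          = (Complex.exp ((p * θ : ℝ) * Complex.I) * (-(Real.sin θ * Complex.I)) ^ m).re / 2
            - (Complex.exp (((p + 2 : ℕ) * θ : ℝ) * Complex.I)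
                * (-(Real.sin θ * Complex.I)) ^ m).re / 2 := by
      intro θ
      rw [pow_succ', ← mul_assoc, exp_mul_I_mul_neg_sin_mul_I]
      push_cast
      ring_nf
      simp [Complex.div_ofNat_re]
    simp_rw [hsplit]
    rw [intervalIntegral.integral_sub (Continuous.intervalIntegrable (by fun_prop) _ _)
      (Continuous.intervalIntegrable (by fun_prop) _ _), intervalIntegral.integral_div,
      intervalIntegral.integral_div, ih (by omega), ih (by omega)]
    simp

lemma abs_besselJ_le_pow_mul_exp (n : ℕ) {x : ℝ} (hx : 0 ≤ x) :
    |besselJ n x| ≤ x ^ n * Real.exp x := by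
  set e : ℝ → ℂ := fun θ => Complex.exp ((n * θ : ℝ) * Complex.I)
  set u : ℝ → ℂ := fun θ => -(Real.sin θ * Complex.I)
  set P : ℝ → ℂ := fun θ => ∑ m ∈ Finset.range n, (x * u θ) ^ m / m.factorial
  have hcos : ∀ θ, Real.cos (n * θ - x * Real.sin θ) = (e θ * Complex.exp (x * u θ)).re := by
    intro θ
    rw [← Complex.exp_ofReal_mul_I_re, ← Complex.exp_add]
    congr 2
    simp only [u]
    push_cast
    ring
  have hP : ∫ θ in (0 : ℝ)..π, (e θ * P θ).re = 0 := by
    have hterm : ∀ θ, (e θ * P θ).re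
        = ∑ m ∈ Finset.range n, x ^ m / m.factorial * (e θ * u θ ^ m).re := by
      intro θ
      simp only [P, Finset.mul_sum, Complex.re_sum]
      refine Finset.sum_congr rfl fun m _ => ?_
      rw [mul_pow, ← Complex.re_ofReal_mul]
      congr 1
      push_cast
      ring
    simp_rw [hterm]
    rw [intervalIntegral.integral_finsetSum
      fun m _ => Continuous.intervalIntegrable (by fun_prop) _ _]
    refine Finset.sum_eq_zero fun m hm => ?_
    rw [intervalIntegral.integral_const_mul,
      integral_re_exp_mul_neg_sin_pow_eq_zero (Finset.mem_range.mp hm), mul_zero]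
  have hremainder : ∀ θ, ‖(e θ * (Complex.exp (x * u θ) - P θ)).re‖ ≤ x ^ n * Real.exp x := by
    intro θ
    have hu : ‖(x : ℂ) * u θ‖ ≤ x := by
      simp only [u, norm_mul, norm_neg, Complex.norm_I, mul_one, Complex.norm_real,
        Real.norm_eq_abs, abs_of_nonneg hx]
      exact mul_le_of_le_one_right hx (Real.abs_sin_le_one θ)
    calc ‖(e θ * (Complex.exp (x * u θ) - P θ)).re‖
        ≤ ‖e θ * (Complex.exp (x * u θ) - P θ)‖ := Complex.abs_re_le_norm _
      _ = ‖Complex.exp (x * u θ) - P θ‖ := by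
        simp only [e, norm_mul, Complex.norm_exp_ofReal_mul_I, one_mul]
      _ ≤ ‖(x : ℂ) * u θ‖ ^ n * Real.exp ‖(x : ℂ) * u θ‖ :=
        Complex.norm_exp_sub_sum_le_norm_mul_exp _ n
      _ ≤ x ^ n * Real.exp x := by gcongr
  have hintegral : ∫ θ in (0 : ℝ)..π, Real.cos (n * θ - x * Real.sin θ)
      = ∫ θ in (0 : ℝ)..π, (e θ * (Complex.exp (x * u θ) - P θ)).re := by
    simp_rw [mul_sub, Complex.sub_re, hcos]
    rw [intervalIntegral.integral_sub (Continuous.intervalIntegrable (by fun_prop) _ _)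
      (Continuous.intervalIntegrable (by fun_prop) _ _), hP, sub_zero]
  have hbound := intervalIntegral.norm_integral_le_of_norm_le_const
    (a := 0) (b := π) fun θ _ => hremainder θ
  rw [sub_zero, abs_of_pos pi_pos, Real.norm_eq_abs, ← hintegral] at hbound
  rw [besselJ, abs_mul, abs_of_pos (one_div_pos.mpr pi_pos), one_div, inv_mul_le_iff₀ pi_pos]
  linarith

lemma abs_besselJ_le_one (n : ℕ) (x : ℝ) : |besselJ n x| ≤ 1 := by
  have hbound := intervalIntegral.norm_integral_le_of_norm_le_const (a := 0) (b := π)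
    fun θ _ => (Real.norm_eq_abs _).trans_le (Real.abs_cos_le_one (n * θ - x * Real.sin θ))
  rw [sub_zero, abs_of_pos pi_pos, one_mul, Real.norm_eq_abs] at hbound
  rw [besselJ, abs_mul, abs_of_pos (one_div_pos.mpr pi_pos), one_div, inv_mul_le_iff₀ pi_pos]
  linarith

lemma abs_besselJ_le_exp_one_mul_pow (n : ℕ) {x : ℝ} (hx : 0 ≤ x) :
    |besselJ n x| ≤ Real.exp 1 * x ^ n := by
  rcases le_total x 1 with hx1 | hx1
  · calc |besselJ n x| ≤ x ^ n * Real.exp x := abs_besselJ_le_pow_mul_exp n hx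
      _ ≤ Real.exp 1 * x ^ n := by rw [mul_comm]; gcongr
  · calc |besselJ n x| ≤ 1 := abs_besselJ_le_one n x
      _ ≤ Real.exp 1 * x ^ n := one_le_mul_of_one_le_of_one_le (Real.one_le_exp zero_le_one)
          (one_le_pow₀ hx1)

lemma setIntegral_Ioi_le_of_le_pow {F : ℝ → ℝ} {A T : ℝ} {n : ℕ} (hT : 0 ≤ T)
    (hF : ∀ y, 0 ≤ F y) (hFle : ∀ y ∈ Set.Ioc 0 T, F y ≤ A * y ^ n)
    (hFzero : ∀ y, T < y → F y = 0) :
    ∫ y in Set.Ioi 0, F y ≤ A * (T ^ (n + 1) / (n + 1)) := by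
  have hdom : ∀ y ∈ Set.Ioi (0 : ℝ), F y ≤ (Set.Ioc 0 T).indicator (fun y => A * y ^ n) y := by
    intro y hy
    by_cases hyT : y ≤ T
    · rw [Set.indicator_of_mem (show y ∈ Set.Ioc 0 T from ⟨hy, hyT⟩)]
      exact hFle y ⟨hy, hyT⟩
    · rw [Set.indicator_of_notMem fun h => hyT h.2, hFzero y (not_le.mp hyT)]
  -- `integral_mono_of_nonneg` needs no integrability of `F`, which may fail (or be junk `0`).
  calc ∫ y in Set.Ioi 0, F y
      ≤ ∫ y in Set.Ioi 0, (Set.Ioc 0 T).indicator (fun y => A * y ^ n) y :=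
        integral_mono_of_nonneg (Filter.Eventually.of_forall hF)
          (((Continuous.integrableOn_Ioc (by fun_prop)).integrable_indicator
            measurableSet_Ioc).integrableOn)
          ((ae_restrict_iff' measurableSet_Ioi).mpr (Filter.Eventually.of_forall hdom))
    _ = A * (T ^ (n + 1) / (n + 1)) := by
      rw [setIntegral_indicator measurableSet_Ioc,
        Set.inter_eq_self_of_subset_right Set.Ioc_subset_Ioi_self,
        ← intervalIntegral.integral_of_le hT, intervalIntegral.integral_const_mul, integral_pow]
      simp

lemma apply_two_mul_log_div_log_eq_zero {E : Type*} [Zero E] {h : ℝ → E} {σ R u : ℝ}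
    (hsupp : Function.support h ⊆ Set.Ioo (-σ) σ) (hR : 1 < R) (hu : R ^ (σ / 2) ≤ u) :
    h (2 * Real.log u / Real.log R) = 0 := by
  by_contra hne
  have hlt := (hsupp (Function.mem_support.mpr hne)).2
  have hlog : σ / 2 * Real.log R ≤ Real.log u := by
    rw [← Real.log_rpow (by linarith)]
    exact Real.log_le_log (by positivity) hu
  rw [div_lt_iff₀ (Real.log_pos hR)] at hlt
  linarith

lemma integral_abs_besselJ_mul_norm_le {k : ℕ} (hk : k ≠ 0) {σ R N B b : ℝ} {h : ℝ → ℂ}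
    (hR : 1 < R) (hN : 1 ≤ N) (hB : ∀ t, ‖h t‖ ≤ B)
    (hsupp : Function.support h ⊆ Set.Ioo (-σ) σ) (hb : 0 < b) :
    ∫ y in Set.Ioi 0, |besselJ (k - 1) y| *
        ‖h (2 * Real.log (b * y * Real.sqrt N / (4 * π)) / Real.log R)‖ ≤
      Real.exp 1 * B * (4 * π) ^ k * R ^ ((k : ℝ) * σ / 2) / b ^ k := by
  obtain ⟨n, rfl⟩ := Nat.exists_eq_add_one_of_ne_zero hk
  rw [Nat.add_sub_cancel]
  have hB0 : 0 ≤ B := (norm_nonneg _).trans (hB 0)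
  have hsqrtN : 1 ≤ Real.sqrt N := Real.one_le_sqrt.mpr hN
  set T := 4 * π * R ^ (σ / 2) / (b * Real.sqrt N)
  have hT : 0 ≤ T := by positivity
  have hTb : T ≤ 4 * π * R ^ (σ / 2) / b :=
    div_le_div_of_nonneg_left (by positivity) hb (le_mul_of_one_le_right hb.le hsqrtN)
  have hvanish : ∀ y, T < y → R ^ (σ / 2) ≤ b * y * Real.sqrt N / (4 * π) := by
    intro y hy
    rw [div_lt_iff₀ (by positivity)] at hy
    rw [le_div_iff₀ (by positivity)]
    linarith
  calc ∫ y in Set.Ioi 0, |besselJ n y| *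
        ‖h (2 * Real.log (b * y * Real.sqrt N / (4 * π)) / Real.log R)‖
      ≤ Real.exp 1 * B * (T ^ (n + 1) / (n + 1)) := by
        refine setIntegral_Ioi_le_of_le_pow hT (fun y => by positivity) (fun y hy => ?_)
          fun y hy => by rw [apply_two_mul_log_div_log_eq_zero hsupp hR (hvanish y hy), norm_zero,
            mul_zero]
        rw [mul_right_comm (Real.exp 1) B]
        exact mul_le_mul (abs_besselJ_le_exp_one_mul_pow n hy.1.le) (hB _) (norm_nonneg _)
          (mul_nonneg (Real.exp_pos 1).le (pow_nonneg hy.1.le n))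
    _ ≤ Real.exp 1 * B * (4 * π * R ^ (σ / 2) / b) ^ (n + 1) := by
        gcongr Real.exp 1 * B * ?_
        exact (div_le_self (by positivity) (le_add_of_nonneg_left n.cast_nonneg)).trans
          (pow_le_pow_left₀ hT hTb _)
    _ = Real.exp 1 * B * (4 * π) ^ (n + 1) * R ^ (((n + 1 : ℕ) : ℝ) * σ / 2) / b ^ (n + 1) := by
        rw [div_pow, mul_pow, ← Real.rpow_natCast (R ^ (σ / 2)),
          ← Real.rpow_mul (by linarith), mul_div_assoc']
        ring_nf

lemma moebius_sq_div_totient_mul_le {b : ℕ} {I M : ℝ} (hI : 0 ≤ I) (hIM : I ≤ M) :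
    ((moebius b : ℝ) ^ 2 / (Nat.totient b : ℝ)) * I ≤ M / (Nat.totient b : ℝ) := by
  have hμ : (moebius b : ℝ) ^ 2 ≤ 1 := by
    rw [sq_le_one_iff_abs_le_one]
    exact_mod_cast abs_moebius_le_one
  calc ((moebius b : ℝ) ^ 2 / (Nat.totient b : ℝ)) * I ≤ (1 / (Nat.totient b : ℝ)) * M := by
        gcongr
    _ = M / (Nat.totient b : ℝ) := one_div_mul_eq_div _ _

lemma moebius_sq_div_totient_mul_integral_le {k : ℕ} (hk : k ≠ 0) {σ R N B : ℝ} {h : ℝ → ℂ}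
    (hR : 1 < R) (hN : 1 ≤ N) (hB : ∀ t, ‖h t‖ ≤ B)
    (hsupp : Function.support h ⊆ Set.Ioo (-σ) σ) {b : ℕ} (hb : 1 ≤ b) :
    ((moebius b : ℝ) ^ 2 / (Nat.totient b : ℝ)) *
        (∫ y in Set.Ioi 0, |besselJ (k - 1) y| *
          ‖h (2 * Real.log (b * y * Real.sqrt N / (4 * π)) / Real.log R)‖) ≤
      Real.exp 1 * B * (4 * π) ^ k * R ^ ((k : ℝ) * σ / 2) / ((Nat.totient b : ℝ) * b ^ k) :=
  (moebius_sq_div_totient_mul_le (setIntegral_nonneg measurableSet_Ioi fun y _ => by positivity)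
    (integral_abs_besselJ_mul_norm_le hk hR hN hB hsupp (by exact_mod_cast hb))).trans_eq
    (by rw [div_div, mul_comm (b ^ k : ℝ)])

theorem bessel_sum_converges_general (k : ℕ) (hk : 2 ≤ k) (sig R N : ℝ)
    (hR : 1 < R) (hN : 1 < N) (h : ℝ → ℂ)
    (hbd : ∃ B : ℝ, ∀ t : ℝ, ‖h t‖ ≤ B)
    (hsupp : Function.support h ⊆ Set.Ioo (-sig) sig) :
    Summable (fun b : ℕ => ((moebius b : ℝ) ^ 2 / (Nat.totient b : ℝ)) *
        ∫ y in Set.Ioi (0 : ℝ), |besselJ (k - 1) y| *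
          ‖h (2 * Real.log (b * y * Real.sqrt N / (4 * π)) / Real.log R)‖) ∧
    ∃ C : ℝ, 0 < C ∧ ∀ b : ℕ, 1 ≤ b →
      ((moebius b : ℝ) ^ 2 / (Nat.totient b : ℝ)) *
          (∫ y in Set.Ioi (0 : ℝ), |besselJ (k - 1) y| *
            ‖h (2 * Real.log (b * y * Real.sqrt N / (4 * π)) / Real.log R)‖) ≤
        C * R ^ ((k : ℝ) * sig / 2) / ((Nat.totient b : ℝ) * (b : ℝ) ^ k) := by
  obtain ⟨B, hB⟩ := hbd
  have hB' : ∀ t, ‖h t‖ ≤ B + 1 := fun t => (hB t).trans (lt_add_one B).le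
  have hB1 : 0 < B + 1 := (norm_nonneg _).trans_lt ((hB 0).trans_lt (lt_add_one B))
  have hterm := fun (b : ℕ) (hb : 1 ≤ b) =>
    moebius_sq_div_totient_mul_integral_le (σ := sig) (by omega : k ≠ 0) hR hN.le hB' hsupp hb
  refine ⟨Summable.of_nonneg_of_le (fun b => mul_nonneg (by positivity)
      (setIntegral_nonneg measurableSet_Ioi fun y _ => by positivity)) (fun b => ?_)
      ((Real.summable_one_div_nat_pow.mpr hk).mul_left
        (Real.exp 1 * (B + 1) * (4 * π) ^ k * R ^ ((k : ℝ) * sig / 2))),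
    Real.exp 1 * (B + 1) * (4 * π) ^ k, by positivity, hterm⟩
  rcases Nat.eq_zero_or_pos b with rfl | hb
  · simp [zero_pow (by omega : k ≠ 0)]
  · refine (hterm b hb).trans ?_
    rw [mul_one_div]
    gcongr
    exact le_mul_of_one_le_left (by positivity) (by exact_mod_cast Nat.totient_pos.mpr hb)

/-- For `k ≥ 2`, `s, R, N > 1` with `R ≥ N`, and `h` bounded with support in
`(-σ, σ)`, the series `∑_b (μ²(b)/φ(b)) ∫_0^∞ |J_{k-1}(y)| |h(2 log(by√N/4π)/log R)| dy`
converges, and the `b`-th summand is `O(R^{kσ/2}/(φ(b) bᵏ))`. -/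
theorem bessel_sum_converges (k : ℕ) (hk : 2 ≤ k) (sig R N : ℝ)
    (hsig : 1 < sig) (hR : 1 < R) (hN : 1 < N) (hRN : N ≤ R) (h : ℝ → ℂ)
    (hbd : ∃ B : ℝ, ∀ t : ℝ, ‖h t‖ ≤ B)
    (hsupp : Function.support h ⊆ Set.Ioo (-sig) sig) :
    Summable (fun b : ℕ => ((moebius b : ℝ) ^ 2 / (Nat.totient b : ℝ)) *
        ∫ y in Set.Ioi (0 : ℝ), |besselJ (k - 1) y| *
          ‖h (2 * Real.log (b * y * Real.sqrt N / (4 * π)) / Real.log R)‖) ∧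
    ∃ C : ℝ, 0 < C ∧ ∀ b : ℕ, 1 ≤ b →
      ((moebius b : ℝ) ^ 2 / (Nat.totient b : ℝ)) *
          (∫ y in Set.Ioi (0 : ℝ), |besselJ (k - 1) y| *
            ‖h (2 * Real.log (b * y * Real.sqrt N / (4 * π)) / Real.log R)‖) ≤
        C * R ^ ((k : ℝ) * sig / 2) / ((Nat.totient b : ℝ) * (b : ℝ) ^ k) :=
  bessel_sum_converges_general k hk sig R N hR hN h hbd hsupp
end
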